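/- arXiv:math/0403401 — 3 statements merged into one kernel-verified Lean document; each statement's English description precedes it below -/
import Mathlib

section
/- Let n ≥ 3 be an odd integer and let Z_n denote the zeta matrix over ℤ of the boolean algebra of subsets of {0,…,n−1} ordered by inclusion. Then det(Z_n + Z_nᵀ) = 0. -/
open Matrix

/-- The zeta matrix over `ℤ` of the boolean algebra of subsets of `{0, …, n-1}`. -/
def boolZeta (n : ℕ) : Matrix (Finset (Fin n)) (Finset (Fin n)) ℤ :=
  Matrix.of fun A B => if A ⊆ B then 1 else 0

/-- The kernel vector. -/
def boolKer (n : ℕ) : Finset (Fin n) → ℤ :=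
  fun B => (-1) ^ B.card - (if B = ∅ then 1 else 0) + (if B = Finset.univ then 1 else 0)

lemma neg_one_pow_sub_card {n : ℕ} (hodd : Odd n) (C : Finset (Fin n)) :
    (-1 : ℤ) ^ (n - C.card) = -(-1) ^ C.card := by
  have h : C.card ≤ n := by simpa using C.card_le_univ
  have h2 : (-1 : ℤ) ^ (n - C.card) * (-1) ^ C.card = (-1) ^ n := by
    rw [← pow_add, Nat.sub_add_cancel h]
  have h3 : (-1 : ℤ) ^ n = -1 := hodd.neg_one_pow
  have h4 : ((-1 : ℤ) ^ C.card) * ((-1 : ℤ) ^ C.card) = 1 := by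
    rw [← pow_add]; exact Even.neg_one_pow ⟨C.card, rfl⟩
  calc (-1 : ℤ) ^ (n - C.card) = (-1 : ℤ) ^ (n - C.card) * ((-1) ^ C.card * (-1) ^ C.card) := by
        rw [h4, mul_one]
    _ = ((-1 : ℤ) ^ (n - C.card) * (-1) ^ C.card) * (-1) ^ C.card := by ring
    _ = -(-1) ^ C.card := by rw [h2, h3]; ring

lemma sum_ker_powerset {n : ℕ} (A : Finset (Fin n)) :
    ∑ B ∈ A.powerset, boolKer n B
      = (if A = ∅ then 1 else 0) - 1 + (if A = Finset.univ then 1 else 0) := by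
  unfold boolKer
  rw [Finset.sum_add_distrib, Finset.sum_sub_distrib, Finset.sum_powerset_neg_one_pow_card]
  congr 1
  · congr 1
    rw [Finset.sum_ite_eq' A.powerset ∅ (fun _ => (1:ℤ))]
    simp
  · rw [Finset.sum_ite_eq' A.powerset Finset.univ (fun _ => (1:ℤ))]
    simp [Finset.mem_powerset, Finset.univ_subset_iff, eq_comm]

/-- For odd `n ≥ 3`, the zeta matrix of the boolean algebra of rank `n` satisfies
`det (Z_n + Z_nᵀ) = 0`. -/
theorem det_boolZeta_add_transpose_eq_zero_of_odd (n : ℕ) (hn : 3 ≤ n) (hodd : Odd n) :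
    (boolZeta n + (boolZeta n)ᵀ).det = 0 := by
  rw [← Matrix.exists_mulVec_eq_zero_iff]
  refine ⟨boolKer n, ?_, ?_⟩
  · intro h
    set a : Fin n := ⟨0, by omega⟩ with ha
    have h0 : boolKer n {a} = 0 := congrFun h {a}
    have hu : ({a} : Finset (Fin n)) ≠ Finset.univ := by
      intro he
      have := congrArg Finset.card he
      simp at this
      omega
    simp [boolKer, hu] at h0
  · funext A
    have hsplit : ∀ B : Finset (Fin n),
        (boolZeta n + (boolZeta n)ᵀ) A B * boolKer n B
          = (if A ⊆ B then boolKer n B else 0) + (if B ⊆ A then boolKer n B else 0) := by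
      intro B
      simp only [Matrix.add_apply, Matrix.transpose_apply, boolZeta, Matrix.of_apply]
      split_ifs <;> ring
    have key : (boolZeta n + (boolZeta n)ᵀ).mulVec (boolKer n) A
        = (∑ B, if A ⊆ B then boolKer n B else 0)
          + (∑ B, if B ⊆ A then boolKer n B else 0) := by
      simp only [Matrix.mulVec, dotProduct]
      rw [← Finset.sum_add_distrib]
      exact Finset.sum_congr rfl fun B _ => hsplit B
    rw [key]
    -- second sum
    have hS2 : (∑ B, if B ⊆ A then boolKer n B else 0) = ∑ B ∈ A.powerset, boolKer n B := by
      rw [show A.powerset = Finset.univ.filter (· ⊆ A) by ext B; simp, Finset.sum_filter]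
    -- first sum, reindex by complement
    have hinv : Function.Involutive (fun B : Finset (Fin n) => Bᶜ) := fun B => compl_compl B
    have hS1 : (∑ B, if A ⊆ B then boolKer n B else 0)
        = ∑ C, if C ⊆ Aᶜ then boolKer n Cᶜ else 0 := by
      rw [← Function.Bijective.sum_comp hinv.bijective
        (fun B => if A ⊆ B then boolKer n B else 0)]
      refine Finset.sum_congr rfl fun C _ => ?_
      congr 1
      simp only [eq_iff_iff]
      constructor
      · intro h; simpa using Finset.compl_subset_compl.2 h
      · intro h; simpa using Finset.compl_subset_compl.2 h
    have hker : ∀ C : Finset (Fin n), boolKer n Cᶜ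
        = -(-1) ^ C.card - (if C = Finset.univ then 1 else 0) + (if C = ∅ then 1 else 0) := by
      intro C
      unfold boolKer
      rw [Finset.card_compl, Fintype.card_fin, neg_one_pow_sub_card hodd]
      congr 2
      · congr 1
        simp [Finset.compl_eq_empty_iff]
      · simp [Finset.compl_eq_univ_iff]
    have hS1' : (∑ C, if C ⊆ Aᶜ then boolKer n Cᶜ else 0)
        = ∑ C ∈ Aᶜ.powerset, boolKer n Cᶜ := by
      rw [show Aᶜ.powerset = Finset.univ.filter (· ⊆ Aᶜ) by ext C; simp, Finset.sum_filter]
    have hS1'' : (∑ C ∈ Aᶜ.powerset, boolKer n Cᶜ)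
        = -(if Aᶜ = ∅ then 1 else 0) - (if Aᶜ = Finset.univ then 1 else 0) + 1 := by
      rw [Finset.sum_congr rfl fun C _ => hker C]
      rw [Finset.sum_add_distrib, Finset.sum_sub_distrib]
      congr 1
      · congr 1
        · rw [Finset.sum_neg_distrib, Finset.sum_powerset_neg_one_pow_card]
        · rw [Finset.sum_ite_eq' Aᶜ.powerset Finset.univ (fun _ => (1:ℤ))]
          simp [Finset.mem_powerset, Finset.univ_subset_iff, eq_comm]
      · rw [Finset.sum_ite_eq' Aᶜ.powerset ∅ (fun _ => (1:ℤ))]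
        simp
    have hAe : (Aᶜ = ∅) ↔ (A = Finset.univ) := Finset.compl_eq_empty_iff A
    have hAu : (Aᶜ = Finset.univ) ↔ (A = ∅) := Finset.compl_eq_univ_iff A
    rw [hS1, hS1', hS1'', hS2, sum_ker_powerset, Pi.zero_apply]
    simp only [hAe, hAu]
    ring
end

section
/- Let Z_n denote the zeta matrix over ℤ of the boolean algebra of subsets of {0,…,n−1} ordered by inclusion, and write 𝔷_n = Z_n + Z_nᵀ. Then det(𝔷_2) = 4, and for every even integer n ≥ 2, (det(𝔷_n))⁴ = 4 · det(𝔷_{n+2}). Equivalently, det(𝔷_n) = 2^{α_n} for even n, where α_2 = 2 and α_{n+2} = 4α_n − 2. -/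
open Matrix

namespace BoolZetaAux

/-- the 2×2 zeta matrix of the two element chain, over `ℚ`. -/
def zq : Matrix Bool Bool ℚ := Matrix.of fun a b => if a then (if b then 1 else 0) else 1

/-- the 2×2 "Coxeter" matrix `(zqᵀ)⁻¹ * zq`. -/
def kq : Matrix Bool Bool ℚ := Matrix.of fun a b => if a then (if b then 0 else -1) else 1

/-- the `n`-fold tensor power of a 2×2 matrix, as a matrix on `Fin n → Bool`. -/
def tp (a : Matrix Bool Bool ℚ) (n : ℕ) :
    Matrix (Fin n → Bool) (Fin n → Bool) ℚ :=
  Matrix.of fun f g => ∏ i, a (f i) (g i)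

lemma tp_apply (a : Matrix Bool Bool ℚ) (n : ℕ) (f g : Fin n → Bool) :
    tp a n f g = ∏ i, a (f i) (g i) := rfl

lemma tp_mul (a b : Matrix Bool Bool ℚ) (n : ℕ) :
    tp a n * tp b n = tp (a * b) n := by
  ext f g
  simp only [Matrix.mul_apply, tp_apply]
  rw [show (∏ i, (∑ c, a (f i) c * b c (g i))) =
      ∑ x ∈ Fintype.piFinset (fun _ : Fin n => (Finset.univ : Finset Bool)),
        ∏ i, a (f i) (x i) * b (x i) (g i) from
    Finset.prod_univ_sum _ _]
  rw [Fintype.piFinset_univ]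
  exact Finset.sum_congr rfl fun h _ => Finset.prod_mul_distrib.symm

lemma tp_one (n : ℕ) : tp 1 n = 1 := by
  ext f g
  by_cases h : f = g
  · subst h
    simp [tp_apply, Matrix.one_apply]
  · rw [tp_apply, Matrix.one_apply_ne h]
    obtain ⟨i, hi⟩ := Function.ne_iff.mp h
    exact Finset.prod_eq_zero (Finset.mem_univ i) (by simp [Matrix.one_apply, hi])

lemma tp_transpose (a : Matrix Bool Bool ℚ) (n : ℕ) :
    (tp a n)ᵀ = tp aᵀ n := by
  ext f g
  simp [tp_apply, Matrix.transpose_apply]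

lemma tp_smul (c : ℚ) (a : Matrix Bool Bool ℚ) (n : ℕ) :
    tp (c • a) n = c ^ n • tp a n := by
  ext f g
  simp only [tp_apply, Matrix.smul_apply, smul_eq_mul]
  rw [Finset.prod_mul_distrib]
  simp

/-- the reindexing equivalence splitting off the first coordinate. -/
def E (m : ℕ) : ((Fin m → Bool) ⊕ (Fin m → Bool)) ≃ (Fin (m + 1) → Bool) :=
  (Equiv.boolProdEquivSum _).symm.trans (Fin.consEquiv fun _ => Bool)

lemma tp_submatrix (a : Matrix Bool Bool ℚ) (m : ℕ) :
    (tp a (m + 1)).submatrix (E m) (E m) =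
      fromBlocks (a false false • tp a m) (a false true • tp a m)
        (a true false • tp a m) (a true true • tp a m) := by
  ext i j
  cases i <;> cases j <;>
    simp [tp_apply, E, Fin.consEquiv, Fin.prod_univ_succ, Matrix.smul_apply, smul_eq_mul]

lemma kq_submatrix (m : ℕ) :
    (tp kq (m + 1)).submatrix (E m) (E m) =
      fromBlocks (tp kq m) (tp kq m) (-(tp kq m)) 0 := by
  rw [tp_submatrix,
    show kq false false = 1 from rfl, show kq false true = 1 from rfl,
    show kq true false = -1 from rfl, show kq true true = 0 from rfl,
    one_smul, neg_one_smul, zero_smul]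

lemma zq_submatrix (m : ℕ) :
    (tp zq (m + 1)).submatrix (E m) (E m) =
      fromBlocks (tp zq m) (tp zq m) 0 (tp zq m) := by
  rw [tp_submatrix,
    show zq false false = 1 from rfl, show zq false true = 1 from rfl,
    show zq true false = 0 from rfl, show zq true true = 1 from rfl,
    one_smul, zero_smul]

lemma submatrix_add' {l m : Type*} (A B : Matrix m m ℚ) (e : l → m) :
    (A + B).submatrix e e = A.submatrix e e + B.submatrix e e := rfl

lemma det_tp_zq : ∀ n, (tp zq n).det = 1 := by
  intro n
  induction n with
  | zero =>
    rw [Matrix.det_unique]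
    simp [tp_apply]
  | succ m ih =>
    rw [← det_submatrix_equiv_self (E m), zq_submatrix, det_fromBlocks_zero₂₁, ih, mul_one]

lemma tp_kq_cube (n : ℕ) (hn : Even n) : tp kq n * (tp kq n * tp kq n) = 1 := by
  rw [tp_mul, tp_mul]
  have h3 : kq * (kq * kq) = (-1 : ℚ) • 1 := by
    ext a b
    cases a <;> cases b <;>
      simp [kq, Matrix.mul_apply, Fintype.sum_bool, Matrix.one_apply]
  rw [h3, tp_smul, tp_one, hn.neg_one_pow, one_smul]

lemma step1 (m : ℕ) :
    (1 + tp kq (m + 1)).det = (1 + tp kq m + tp kq m * tp kq m).det := by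
  rw [← det_submatrix_equiv_self (E m), submatrix_add', Matrix.submatrix_one_equiv,
    kq_submatrix, ← fromBlocks_one, fromBlocks_add]
  rw [show (0 : Matrix (Fin m → Bool) (Fin m → Bool) ℚ) + tp kq m = tp kq m from zero_add _,
    show (0 : Matrix (Fin m → Bool) (Fin m → Bool) ℚ) + -(tp kq m) = -(tp kq m) from zero_add _,
    show (1 : Matrix (Fin m → Bool) (Fin m → Bool) ℚ) + 0 = 1 from add_zero _]
  rw [Matrix.det_fromBlocks_one₂₂]
  congr 1
  noncomm_ring

lemma step2 (m : ℕ) (hK : tp kq m * (tp kq m * tp kq m) = 1) :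
    (1 + tp kq (m + 1) + tp kq (m + 1) * tp kq (m + 1)).det
      = 2 ^ (2 ^ m) * (1 + tp kq m).det := by
  set K := tp kq m with hKdef
  rw [← det_submatrix_equiv_self (E m), submatrix_add', submatrix_add',
    Matrix.submatrix_one_equiv, ← Matrix.submatrix_mul_equiv _ _ _ (E m) _, kq_submatrix,
    fromBlocks_multiply, ← fromBlocks_one, fromBlocks_add, fromBlocks_add]
  have hb11 : (1 : Matrix (Fin m → Bool) (Fin m → Bool) ℚ) + K + (K * K + K * -K) = 1 + K := by
    noncomm_ring
  have hb12 : (0 : Matrix (Fin m → Bool) (Fin m → Bool) ℚ) + K + (K * K + K * 0) = K + K * K := by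
    noncomm_ring
  have hb21 : (0 : Matrix (Fin m → Bool) (Fin m → Bool) ℚ) + -K + (-K * K + 0 * -K)
      = -(K + K * K) := by noncomm_ring
  have hb22 : (1 : Matrix (Fin m → Bool) (Fin m → Bool) ℚ) + 0 + (-K * K + 0 * 0)
      = 1 - K * K := by noncomm_ring
  rw [hb11, hb12, hb21, hb22]
  have h2 : (1 + K) * (1 - K + K * K) = 1 + K * (K * K) := by noncomm_ring
  have h2' : (1 - K + K * K) * (1 + K) = 1 + K * (K * K) := by noncomm_ring
  letI : Invertible (1 + K) :=
    ⟨(2⁻¹ : ℚ) • (1 - K + K * K),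
      by rw [Matrix.smul_mul, h2', hK, ← two_smul ℚ (1 : Matrix (Fin m → Bool) (Fin m → Bool) ℚ),
          smul_smul]; norm_num,
      by rw [Matrix.mul_smul, h2, hK, ← two_smul ℚ (1 : Matrix (Fin m → Bool) (Fin m → Bool) ℚ),
          smul_smul]; norm_num⟩
  rw [Matrix.det_fromBlocks₁₁]
  have hinv : ⅟(1 + K) = (2⁻¹ : ℚ) • (1 - K + K * K) := rfl
  rw [hinv]
  have w : (K + K * K) * (1 - K + K * K) * (K + K * K) = (2 : ℚ) • (K * K + 1) := by
    have e1 : (K + K * K) * (1 - K + K * K) * (K + K * K)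
        = K * ((1 + K) * (1 - K + K * K)) * (K + K * K) := by noncomm_ring
    rw [e1, h2, hK]
    have e3 : K * ((1 : Matrix (Fin m → Bool) (Fin m → Bool) ℚ) + 1) * (K + K * K)
        = (K * K + K * (K * K)) + (K * K + K * (K * K)) := by noncomm_ring
    rw [e3, hK, two_smul]
  have key : (1 - K * K) - -(K + K * K) * ((2⁻¹ : ℚ) • (1 - K + K * K)) * (K + K * K)
      = (2 : ℚ) • 1 := by
    calc (1 - K * K) - -(K + K * K) * ((2⁻¹ : ℚ) • (1 - K + K * K)) * (K + K * K)
        = (1 - K * K) + (2⁻¹ : ℚ) • ((K + K * K) * (1 - K + K * K) * (K + K * K)) := by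
          rw [Matrix.mul_smul, Matrix.smul_mul, neg_mul, neg_mul, smul_neg, sub_neg_eq_add]
      _ = (1 - K * K) + (2⁻¹ : ℚ) • ((2 : ℚ) • (K * K + 1)) := by rw [w]
      _ = (1 - K * K) + (K * K + 1) := by rw [smul_smul]; norm_num
      _ = (2 : ℚ) • 1 := by rw [two_smul]; noncomm_ring
  rw [key, Matrix.det_smul, det_one, mul_one]
  have hcard : Fintype.card (Fin m → Bool) = 2 ^ m := by simp
  rw [hcard, mul_comm]

/-- `dd n = det (1 + K_n)`. -/
def dd (n : ℕ) : ℚ := (1 + tp kq n).det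

lemma dd_step (n : ℕ) (hn : Even n) : dd (n + 2) = 2 ^ (2 ^ n) * dd n := by
  unfold dd
  rw [show n + 2 = (n + 1) + 1 from rfl, step1 (n + 1), step2 n (tp_kq_cube n hn)]

lemma dd_zero : dd 0 = 2 := by
  unfold dd
  rw [Matrix.det_unique]
  simp [tp_apply, Matrix.add_apply, Matrix.one_apply]
  norm_num

lemma dd_cube : ∀ j : ℕ, dd (2 * j) ^ 3 = 2 ^ (2 ^ (2 * j) + 2) := by
  intro j
  induction j with
  | zero => norm_num [dd_zero]
  | succ j ih =>
    rw [show 2 * (j + 1) = 2 * j + 2 from by ring]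
    calc dd (2 * j + 2) ^ 3 = (2 ^ (2 ^ (2 * j)) * dd (2 * j)) ^ 3 := by
          rw [dd_step _ ⟨j, two_mul j⟩]
      _ = 2 ^ (2 ^ (2 * j) * 3) * 2 ^ (2 ^ (2 * j) + 2) := by rw [mul_pow, ← pow_mul, ih]
      _ = 2 ^ (2 ^ (2 * j) * 3 + (2 ^ (2 * j) + 2)) := (pow_add 2 _ _).symm
      _ = 2 ^ (2 ^ (2 * j + 2) + 2) := by
          congr 1
          have h4 : 2 ^ (2 * j + 2) = 4 * 2 ^ (2 * j) := by rw [pow_add]; ring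
          rw [h4]; ring

lemma factor (n : ℕ) : tp zq n + (tp zq n)ᵀ = (tp zq n)ᵀ * (1 + tp kq n) := by
  have hzk : zqᵀ * kq = zq := by
    ext a b
    cases a <;> cases b <;>
      simp [zq, kq, Matrix.mul_apply, Fintype.sum_bool, Matrix.transpose_apply]
  have h : (tp zq n)ᵀ * tp kq n = tp zq n := by
    rw [tp_transpose, tp_mul, hzk]
  rw [Matrix.mul_add, Matrix.mul_one, h, add_comm]

/-- subsets of `Fin n` vs indicator functions. -/
def eF (n : ℕ) : Finset (Fin n) ≃ (Fin n → Bool) where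
  toFun A i := decide (i ∈ A)
  invFun f := Finset.univ.filter (fun i => f i = true)
  left_inv A := by ext i; simp
  right_inv f := by funext i; simp

lemma tp_zq_apply (n : ℕ) (f g : Fin n → Bool) :
    tp zq n f g = if (∀ i, f i = true → g i = true) then 1 else 0 := by
  split_ifs with h
  · rw [tp_apply]
    apply Finset.prod_eq_one
    intro i _
    cases hf : f i with
    | false => simp [zq]
    | true => simp [zq, h i hf]
  · push_neg at h
    obtain ⟨i, hfi, hgi⟩ := h
    rw [tp_apply]
    refine Finset.prod_eq_zero (Finset.mem_univ i) ?_
    have hgi' : g i = false := by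
      cases hg : g i
      · rfl
      · exact absurd hg hgi
    simp [zq, hfi, hgi']

lemma cast_dd (n : ℕ) :
    (((boolZeta n + (boolZeta n)ᵀ).det : ℤ) : ℚ) = dd n := by
  have hmap : ((boolZeta n + (boolZeta n)ᵀ).map (Int.castRingHom ℚ))
      = (tp zq n + (tp zq n)ᵀ).submatrix (eF n) (eF n) := by
    ext A B
    have e1 : (∀ i, eF n A i = true → eF n B i = true) ↔ A ⊆ B := by
      simp [eF, Finset.subset_iff]
    have e2 : (∀ i, eF n B i = true → eF n A i = true) ↔ B ⊆ A := by
      simp [eF, Finset.subset_iff]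
    simp only [Matrix.map_apply, Matrix.add_apply, Matrix.transpose_apply,
      Matrix.submatrix_apply, boolZeta, Matrix.of_apply, tp_zq_apply, e1, e2]
    simp [apply_ite (Int.castRingHom ℚ)]
  calc (((boolZeta n + (boolZeta n)ᵀ).det : ℤ) : ℚ)
      = ((Int.castRingHom ℚ).mapMatrix (boolZeta n + (boolZeta n)ᵀ)).det := by
        exact RingHom.map_det (Int.castRingHom ℚ) _
    _ = (tp zq n + (tp zq n)ᵀ).det := by
        rw [RingHom.mapMatrix_apply, hmap, det_submatrix_equiv_self]
    _ = dd n := by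
        rw [factor, det_mul, det_transpose, det_tp_zq, one_mul]
        rfl

end BoolZetaAux

open BoolZetaAux in
/-- Writing `𝔷_n = Z_n + Z_nᵀ` for the zeta matrix of the boolean algebra of rank `n`:
`det 𝔷_2 = 4`, and for every even `n ≥ 2`, `(det 𝔷_n)⁴ = 4 · det 𝔷_{n+2}`. -/
theorem det_boolZeta_add_transpose_recurrence :
    (boolZeta 2 + (boolZeta 2)ᵀ).det = 4 ∧
      ∀ n : ℕ, 2 ≤ n → Even n →
        (boolZeta n + (boolZeta n)ᵀ).det ^ 4
          = 4 * (boolZeta (n + 2) + (boolZeta (n + 2))ᵀ).det := by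
  constructor
  · have h := cast_dd 2
    have h2 : dd 2 = 4 := by
      have hs := dd_step 0 Even.zero
      rw [dd_zero] at hs
      norm_num at hs
      exact hs
    rw [h2] at h
    exact_mod_cast h
  · intro n _ hn
    obtain ⟨j, hj⟩ := hn
    have hn2 : n = 2 * j := by omega
    have key3 : dd n ^ 3 = 2 ^ (2 ^ n + 2) := by rw [hn2]; exact dd_cube j
    have hstep : dd (n + 2) = 2 ^ (2 ^ n) * dd n := dd_step n ⟨j, hj⟩
    have hq : ((boolZeta n + (boolZeta n)ᵀ).det : ℚ) ^ 4
        = 4 * ((boolZeta (n + 2) + (boolZeta (n + 2))ᵀ).det : ℚ) := by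
      rw [cast_dd, cast_dd, hstep]
      calc dd n ^ 4 = dd n ^ 3 * dd n := by ring
        _ = 2 ^ (2 ^ n + 2) * dd n := by rw [key3]
        _ = 4 * (2 ^ (2 ^ n) * dd n) := by rw [pow_add]; ring
    exact_mod_cast hq
end

section
/- Let n be an even positive integer and let Z_n denote the zeta matrix over ℤ of the boolean algebra of subsets of {0,…,n−1} ordered by inclusion. Then det(Z_n + Z_nᵀ) = 2^{(2ⁿ+2)/3}. -/
/-!
Let `Z` be the zeta matrix, `J` the permutation matrix of complementation, `D` the diagonal
matrix of signs `(-1)^|A|` and `K = D Z`. Möbius inversion on the boolean algebra says `K² = 1`,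
and an alternating sum over a boolean interval gives `Z J K = Zᵀ`, so `Z + Zᵀ = Z (1 + J K)` and
`det (Z + Zᵀ) = det (1 + J K)`. For even `n`, `J` commutes with `D`, which turns `Z J K = Zᵀ` into
the braid relation `J K J = K J K`; hence `(J K)³ = 1`. The eigenvalues of `J K` are then `1`, `ω`
and `ω̄` with multiplicities `a`, `b`, `c`; the trace `a + b ω + c ω̄ = 1` is real, so `b = c` and
`a - b = 1`, while `a + 2 b = 2ⁿ`. As `(1 + ω)(1 + ω̄) = 1`, `det (1 + J K) = 2^a` with
`a = (2ⁿ + 2) / 3`.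
-/

open Matrix

open Finset Polynomial ComplexConjugate

theorem pow_three_eq_one_of_braid {M : Type*} [Monoid M] {j k : M} (hj : j * j = 1)
    (hk : k * k = 1) (hjk : j * k * j = k * j * k) : (j * k) ^ 3 = 1 :=
  calc (j * k) ^ 3 = (j * k * j) * (k * j * k) := by simp only [pow_three, mul_assoc]
    _ = k * j * (k * k) * j * k := by rw [hjk]; simp only [mul_assoc]
    _ = 1 := by rw [hk, mul_one, mul_assoc k, hj, mul_one, hk]

theorem Finset.sum_Icc_neg_one_pow_card {α : Type*} [DecidableEq α] (s t : Finset α) :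
    ∑ u ∈ Icc s t, (-1 : ℤ) ^ #u = if s = t then (-1) ^ #s else 0 := by
  by_cases hst : s ⊆ t
  · have hdisj {u} (hu : u ∈ (t \ s).powerset) : Disjoint s u :=
      disjoint_sdiff.mono_right (mem_powerset.mp hu)
    rw [Icc_eq_image_powerset hst, sum_image fun u hu v hv h => by
        rw [← union_sdiff_cancel_left (hdisj hu), h, union_sdiff_cancel_left (hdisj hv)],
      sum_congr rfl fun u hu => by rw [card_union_of_disjoint (hdisj hu), pow_add],
      ← mul_sum, sum_powerset_neg_one_pow_card, mul_ite, mul_one, mul_zero]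
    exact if_congr (sdiff_eq_empty_iff_subset.trans ⟨hst.antisymm, fun h => h ▸ subset_rfl⟩)
      rfl rfl
  · rw [Icc_eq_empty (by simpa using hst), sum_empty, if_neg (by rintro rfl; exact hst le_rfl)]

theorem Finset.neg_one_pow_card_compl {α R : Type*} [Fintype α] [DecidableEq α] [Monoid R]
    [HasDistribNeg R] (h : Even (Fintype.card α)) (s : Finset α) : (-1 : R) ^ #sᶜ = (-1) ^ #s := by
  rw [← card_compl_add_card s, Nat.even_add] at h
  exact neg_one_pow_congr h

noncomputable def cubeRootOfUnity : ℂ := ⟨-1 / 2, √3 / 2⟩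

local notation "ω" => cubeRootOfUnity

lemma cubeRootOfUnity_add_conj : ω + conj ω = -1 := by
  apply Complex.ext <;> simp [cubeRootOfUnity]

lemma cubeRootOfUnity_mul_conj : ω * conj ω = 1 := by
  rw [Complex.mul_conj, cubeRootOfUnity, Complex.normSq_mk, div_mul_div_comm √3,
    Real.mul_self_sqrt zero_le_three]
  norm_num

lemma re_cubeRootOfUnity : (ω).re = -1 / 2 := rfl

lemma im_cubeRootOfUnity_pos : 0 < (ω).im := by simp [cubeRootOfUnity]

lemma eq_one_or_eq_cubeRootOfUnity_or_eq_conj {z : ℂ} (hz : z ^ 3 = 1) :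
    z = 1 ∨ z = ω ∨ z = conj ω := by
  have : (z - 1) * (z - ω) * (z - conj ω) = 0 := by
    linear_combination hz - (z - 1) * z * cubeRootOfUnity_add_conj
      + (z - 1) * cubeRootOfUnity_mul_conj
  simpa [sub_eq_zero, or_assoc] using this

namespace Multiset

variable {s : Multiset ℂ}

lemma eq_replicate_add_of_pow_three_eq_one (hs : ∀ z ∈ s, z ^ 3 = 1) :
    s = replicate (s.count 1) 1 + replicate (s.count ω) ω +
      replicate (s.count (conj ω)) (conj ω) := by
  have hT : s.toFinset ⊆ {1, ω, conj ω} := fun z hz => by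
    simpa using eq_one_or_eq_cubeRootOfUnity_or_eq_conj (hs z (mem_toFinset.mp hz))
  have hω := im_cubeRootOfUnity_pos
  conv_lhs => rw [← toFinset_sum_count_nsmul_eq s, Finset.sum_subset hT fun z _ hz => by
    rw [count_eq_zero_of_notMem (by simpa using hz), zero_nsmul]]
  rw [Finset.sum_insert (by simp [Complex.ext_iff]; constructor <;> intro _ <;> linarith),
    Finset.sum_pair (by simp [Complex.ext_iff]; linarith), add_assoc]
  simp only [nsmul_singleton]

lemma count_cubeRootOfUnity_eq_count_conj (hs : ∀ z ∈ s, z ^ 3 = 1) (him : s.sum.im = 0) :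
    s.count ω = s.count (conj ω) := by
  rw [eq_replicate_add_of_pow_three_eq_one hs] at him
  simp only [sum_add, sum_replicate, nsmul_eq_mul, Complex.add_im, Complex.mul_im,
    Complex.natCast_re, Complex.natCast_im, Complex.one_im, Complex.conj_im] at him
  have : ((s.count ω : ℝ) - s.count (conj ω)) * (ω).im = 0 := by linarith
  exact_mod_cast sub_eq_zero.mp ((mul_eq_zero.mp this).resolve_right im_cubeRootOfUnity_pos.ne')

lemma prod_map_one_add_of_pow_three_eq_one (hs : ∀ z ∈ s, z ^ 3 = 1) (him : s.sum.im = 0) :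
    (s.map (1 + ·)).prod = 2 ^ s.count 1 := by
  have hconj : (1 + ω) * (1 + conj ω) = 1 := by
    linear_combination cubeRootOfUnity_add_conj + cubeRootOfUnity_mul_conj
  conv_lhs => rw [eq_replicate_add_of_pow_three_eq_one hs]
  rw [map_add, map_add, prod_add, prod_add, map_replicate, map_replicate, map_replicate,
    prod_replicate, prod_replicate, prod_replicate, ← count_cubeRootOfUnity_eq_count_conj hs him,
    mul_assoc, ← mul_pow, hconj, one_pow, mul_one, one_add_one_eq_two]

lemma three_mul_count_one_of_pow_three_eq_one (hs : ∀ z ∈ s, z ^ 3 = 1) (him : s.sum.im = 0) :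
    3 * (s.count 1 : ℝ) = card s + 2 * s.sum.re := by
  have hbc := count_cubeRootOfUnity_eq_count_conj hs him
  conv_rhs => rw [eq_replicate_add_of_pow_three_eq_one hs]
  simp only [card_add, card_replicate, sum_add, sum_replicate, nsmul_eq_mul, Complex.add_re,
    Complex.mul_re, Complex.natCast_re, Complex.natCast_im, Complex.one_re, Complex.conj_re,
    re_cubeRootOfUnity, hbc]
  push_cast
  ring

end Multiset

variable {ι K : Type*} [Fintype ι] [DecidableEq ι] [Field K]

lemma Matrix.pow_eq_one_of_mem_roots_charpoly {M : Matrix ι ι K} {k : ℕ} (hM : M ^ k = 1) {z : K}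
    (hz : z ∈ M.charpoly.roots) : z ^ k = 1 := by
  have : Nonempty ι := by
    by_contra h
    simp [not_nonempty_iff.mp h] at hz
  simpa [hM, spectrum.one_eq] using
    spectrum.pow_mem_pow M k (mem_spectrum_of_isRoot_charpoly (isRoot_of_mem_roots hz))

lemma Matrix.card_roots_charpoly [IsAlgClosed K] (M : Matrix ι ι K) :
    Multiset.card M.charpoly.roots = Fintype.card ι := by
  rw [← (IsAlgClosed.splits M.charpoly).natDegree_eq_card_roots, charpoly_natDegree_eq_dim]

lemma Matrix.det_one_add_eq_prod_roots_charpoly [IsAlgClosed K] (M : Matrix ι ι K) :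
    (1 + M).det = (M.charpoly.roots.map (1 + ·)).prod := by
  have h1 : 1 + M = M - scalar ι (-1 : K) := by rw [map_neg, map_one, sub_neg_eq_add, add_comm]
  have h2 : X + C (-1 : K) = C 1 * X + C (-1) := by simp
  rw [h1, det_eq_prod_roots_charpoly, charpoly_sub_scalar, h2,
    roots_comp_C_mul_X_add_C _ _ _ isUnit_one]
  simp [add_comm]

theorem Matrix.det_one_add_eq_two_pow_of_pow_three_eq_one (M : Matrix ι ι ℂ) (hM : M ^ 3 = 1)
    (him : M.trace.im = 0) {a : ℕ} (ha : 3 * (a : ℝ) = Fintype.card ι + 2 * M.trace.re) :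
    (1 + M).det = 2 ^ a := by
  have hs : ∀ z ∈ M.charpoly.roots, z ^ 3 = 1 := fun z hz => pow_eq_one_of_mem_roots_charpoly hM hz
  rw [trace_eq_sum_roots_charpoly] at him ha
  have hcount : M.charpoly.roots.count 1 = a := by
    have := Multiset.three_mul_count_one_of_pow_three_eq_one hs him
    rw [card_roots_charpoly] at this
    exact_mod_cast (by linarith : (M.charpoly.roots.count 1 : ℝ) = a)
  rw [det_one_add_eq_prod_roots_charpoly, Multiset.prod_map_one_add_of_pow_three_eq_one hs him,
    hcount]

theorem Matrix.det_one_add_eq_two_pow_of_pow_three_eq_one_int (M : Matrix ι ι ℤ) (hM : M ^ 3 = 1)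
    {a : ℕ} (ha : 3 * (a : ℤ) = Fintype.card ι + 2 * M.trace) : (1 + M).det = 2 ^ a := by
  let f := Int.castRingHom ℂ
  have htr : (f.mapMatrix M).trace = M.trace := (AddMonoidHom.map_trace f.toAddMonoidHom M).symm
  apply Int.cast_injective (α := ℂ)
  have := (f.mapMatrix M).det_one_add_eq_two_pow_of_pow_three_eq_one
    (by rw [← map_pow, hM, map_one]) (by rw [htr]; simp) (a := a) (by rw [htr]; exact_mod_cast ha)
  rw [← map_one f.mapMatrix, ← map_add, ← RingHom.map_det] at this
  simpa using this

variable (n : ℕ)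

def boolCompl : Matrix (Finset (Fin n)) (Finset (Fin n)) ℤ :=
  (compl_involutive.toPerm _).permMatrix ℤ

def boolSign : Matrix (Finset (Fin n)) (Finset (Fin n)) ℤ :=
  diagonal fun A => (-1) ^ #A

def boolSignedZeta : Matrix (Finset (Fin n)) (Finset (Fin n)) ℤ :=
  of fun A B => if A ⊆ B then (-1) ^ #A else 0

variable {n}

lemma boolCompl_mul (M : Matrix (Finset (Fin n)) (Finset (Fin n)) ℤ) :
    boolCompl n * M = M.submatrix compl id :=
  PEquiv.toMatrix_toPEquiv_mul _ M

lemma mul_boolCompl (M : Matrix (Finset (Fin n)) (Finset (Fin n)) ℤ) :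
    M * boolCompl n = M.submatrix id compl :=
  PEquiv.mul_toMatrix_toPEquiv M _

lemma boolCompl_mul_self : boolCompl n * boolCompl n = 1 := by
  rw [boolCompl_mul]
  ext A B
  simp [boolCompl, one_apply]

lemma boolSign_mul_boolZeta : boolSign n * boolZeta n = boolSignedZeta n := by
  ext A B
  simp [boolSign, boolZeta, boolSignedZeta, diagonal_mul]

lemma boolSignedZeta_mul_self : boolSignedZeta n * boolSignedZeta n = 1 := by
  ext A B
  simp only [mul_apply, boolSignedZeta, of_apply, ite_mul, zero_mul, mul_ite, mul_zero,
    ← ite_and, ← sum_filter, ← mul_sum]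
  rw [show ({u | u ⊆ B ∧ A ⊆ u} : Finset _) = Icc A B by ext; simp [and_comm],
    sum_Icc_neg_one_pow_card, one_apply, mul_ite, mul_zero, ← pow_add, Even.neg_one_pow ⟨_, rfl⟩]

lemma boolZeta_mul_boolCompl_mul_boolSignedZeta :
    boolZeta n * (boolCompl n * boolSignedZeta n) = (boolZeta n)ᵀ := by
  ext A B
  rw [boolCompl_mul, mul_apply, ← Equiv.sum_comp (compl_involutive.toPerm _)]
  simp only [Function.Involutive.coe_toPerm, submatrix_apply, compl_compl, id,
    boolSignedZeta, boolZeta, of_apply, transpose_apply, ite_mul, one_mul, zero_mul,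
    ← ite_and, ← sum_filter]
  rw [show ({u | A ⊆ uᶜ ∧ u ⊆ B} : Finset (Finset (Fin n))) = (B \ A).powerset by
    ext; simp [subset_sdiff, subset_compl_iff_disjoint_left, disjoint_comm, and_comm],
    sum_powerset_neg_one_pow_card]
  simp only [sdiff_eq_empty_iff_subset]

lemma boolCompl_mul_boolZeta_mul_boolCompl :
    boolCompl n * boolZeta n * boolCompl n = (boolZeta n)ᵀ := by
  ext A B
  simp [boolCompl_mul, mul_boolCompl, boolZeta]

lemma boolCompl_mul_boolSign (he : Even n) :
    boolCompl n * boolSign n = boolSign n * boolCompl n := by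
  ext A B
  simp only [boolCompl_mul, mul_boolCompl, submatrix_apply, id, boolSign, diagonal_apply,
    neg_one_pow_card_compl (by rwa [Fintype.card_fin])]
  exact if_congr (compl_eq_comm.trans eq_comm) rfl rfl

lemma trace_boolCompl_mul_boolSignedZeta : (boolCompl n * boolSignedZeta n).trace = 1 := by
  simp [trace, boolCompl_mul, boolSignedZeta]

lemma boolCompl_mul_boolSignedZeta_mul_boolCompl (he : Even n) :
    boolCompl n * boolSignedZeta n * boolCompl n =
      boolSignedZeta n * boolCompl n * boolSignedZeta n :=
  calc boolCompl n * boolSignedZeta n * boolCompl n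
      = boolSign n * (boolCompl n * boolZeta n * boolCompl n) := by
        rw [← boolSign_mul_boolZeta, ← mul_assoc, boolCompl_mul_boolSign he]
        simp only [mul_assoc]
    _ = boolSignedZeta n * boolCompl n * boolSignedZeta n := by
        rw [boolCompl_mul_boolZeta_mul_boolCompl, ← boolZeta_mul_boolCompl_mul_boolSignedZeta,
          ← boolSign_mul_boolZeta]
        simp only [mul_assoc]

lemma det_boolZeta : (boolZeta n).det = 1 := by
  have hZ : (boolZeta n).BlockTriangular card := fun A B h =>
    if_neg fun hAB => (card_le_card hAB).not_gt h
  rw [hZ.det]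
  refine prod_eq_one fun k _ => ?_
  suffices (boolZeta n).toSquareBlock card k = 1 by rw [this, det_one]
  ext ⟨A, hA⟩ ⟨B, hB⟩
  simp only [toSquareBlock_def, boolZeta, of_apply, one_apply, Subtype.mk.injEq]
  exact if_congr ⟨fun hAB => eq_of_subset_of_card_le hAB (hB.trans hA.symm).le,
    fun h => h ▸ subset_rfl⟩ rfl rfl

lemma three_dvd_two_pow_add_two (he : Even n) : 3 ∣ 2 ^ n + 2 := by
  obtain ⟨k, rfl⟩ := he
  rw [← two_mul, pow_mul]
  norm_num [Nat.dvd_iff_mod_eq_zero, Nat.add_mod, Nat.pow_mod]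

theorem det_boolZeta_add_transpose_of_even_general (n : ℕ) (he : Even n) :
    (boolZeta n + (boolZeta n)ᵀ).det = 2 ^ ((2 ^ n + 2) / 3) := by
  have hsplit :
      boolZeta n + (boolZeta n)ᵀ = boolZeta n * (1 + boolCompl n * boolSignedZeta n) := by
    rw [mul_add, mul_one, boolZeta_mul_boolCompl_mul_boolSignedZeta]
  have hcube : (boolCompl n * boolSignedZeta n) ^ 3 = 1 :=
    pow_three_eq_one_of_braid boolCompl_mul_self boolSignedZeta_mul_self
      (boolCompl_mul_boolSignedZeta_mul_boolCompl he)
  rw [hsplit, det_mul, det_boolZeta, one_mul]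
  refine det_one_add_eq_two_pow_of_pow_three_eq_one_int _ hcube ?_
  rw [trace_boolCompl_mul_boolSignedZeta, Fintype.card_finset, Fintype.card_fin]
  exact_mod_cast Nat.mul_div_cancel' (three_dvd_two_pow_add_two he)

/-- For even `n ≥ 1`, the zeta matrix of the boolean algebra of rank `n` satisfies
`det (Z_n + Z_nᵀ) = 2^{(2ⁿ + 2)/3}`. -/
theorem det_boolZeta_add_transpose_of_even (n : ℕ) (hn : 0 < n) (he : Even n) :
    (boolZeta n + (boolZeta n)ᵀ).det = 2 ^ ((2 ^ n + 2) / 3) :=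
  det_boolZeta_add_transpose_of_even_general n he
end
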